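/- arXiv:math/0603743 — 2 statements merged into one kernel-verified Lean document; each statement's English description precedes it below -/
import Mathlib

section
/- Let p be a prime and let m, r be coprime positive integers with r < m such that the multiplicative order of r modulo m equals p. Then every group homomorphism ρ : G_{m,r} → GL(p,ℂ) that is reducible — i.e., for which there exists a complex subspace W of ℂ^p with 0 < dim W < p and ρ(g)·W = W for all g ∈ G_{m,r} — fails to be injective. -/
open Matrix

/-- The defining relations of Amitsur's `D`-group `G_{m,r}`:
`X^m = 1`, `Y^n = X^t` and `Y X Y⁻¹ = X^r`, where `s = gcd(r-1, m)`, `t = m/s` and `n` is the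
multiplicative order of `r` modulo `m`.  Here `X` and `Y` are the generators `0` and `1`. -/
def GmrRels (m r : ℕ) : Set (FreeGroup (Fin 2)) :=
  { FreeGroup.of 0 ^ m,
    FreeGroup.of 1 ^ orderOf ((r : ZMod m)) * (FreeGroup.of 0 ^ (m / Nat.gcd (r - 1) m))⁻¹,
    FreeGroup.of 1 * FreeGroup.of 0 * (FreeGroup.of 1)⁻¹ * (FreeGroup.of 0 ^ r)⁻¹ }

/-- Amitsur's `D`-group `G_{m,r}`, given by the presentation
`⟨X, Y ∣ X^m = 1, Y^n = X^t, Y X Y⁻¹ = X^r⟩`. -/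
abbrev Gmr (m r : ℕ) : Type := PresentedGroup (GmrRels m r)

/-!
Write `a = ρ(X)` and `b = ρ(Y)`, so that `a ^ m = 1` and `b a b⁻¹ = a ^ r`. On any
`⟨a, b⟩`-invariant space of dimension `< p`, conjugation by `b` permutes the eigenvalues of `a`
by `μ ↦ μ ^ r`, a map whose `p`-th iterate fixes every `m`-th root of unity. As `p` is prime, an
orbit that is not a fixed point has `p` elements, i.e. `p` distinct eigenvalues; so every
eigenvalue is fixed, and since `a` is diagonalisable, `a ^ r = a` there. Applied to `W` and to
`ℂ^p / W`, this makes `c = a ^ r a⁻¹` unipotent; being also of finite order, `c = 1`. But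
`X ^ r ≠ X` in `G_{m,r}`, as the monomial representation induced from a faithful character of
`⟨X⟩` shows.
-/

open Module

theorem Function.IsPeriodicPt.isFixedPt_of_ncard_lt {α : Type*} {g : α → α} {s : Set α}
    (hs : Set.MapsTo g s s) (hfin : s.Finite) {p : ℕ} (hp : p.Prime) (hcard : s.ncard < p)
    {x : α} (hx : x ∈ s) (hper : IsPeriodicPt g p x) : IsFixedPt g x := by
  rcases hp.eq_one_or_self_of_dvd _ hper.minimalPeriod_dvd with h | h
  · exact minimalPeriod_eq_one_iff_isFixedPt.mp h
  · have horbit : (Set.Iio p).ncard ≤ s.ncard :=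
      Set.ncard_le_ncard_of_injOn (g^[·] x) (fun k _ => hs.iterate k hx)
        (h ▸ iterate_injOn_Iio_minimalPeriod) hfin
    rw [Set.ncard_Iio_nat] at horbit
    omega

namespace Module.End

open Polynomial

variable {K V : Type*} [Field K] [AddCommGroup V] [Module K V]

theorem isSemisimple_of_pow_eq_one {f : End K V} {m : ℕ} (hm : (m : K) ≠ 0) (hf : f ^ m = 1) :
    f.IsSemisimple :=
  isSemisimple_of_squarefree_aeval_eq_zero
    (separable_X_pow_sub_C (1 : K) hm one_ne_zero).squarefree (by simp [hf])

theorem HasEigenvalue.pow_eq_one {f : End K V} {m : ℕ} (hf : f ^ m = 1) {μ : K}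
    (hμ : f.HasEigenvalue μ) : μ ^ m = 1 := by
  obtain ⟨v, hv⟩ := hμ.exists_hasEigenvector
  have h : (1 : K) • v = μ ^ m • v := by rw [one_smul, ← hv.pow_apply, hf, one_apply]
  exact (smul_left_injective K hv.2 h).symm

theorem pow_mem_spectrum_of_units_conj {f : End K V} (u : (End K V)ˣ) {r : ℕ}
    (hconj : u * f * u⁻¹ = f ^ r) {μ : K} (hμ : μ ∈ spectrum K f) :
    μ ^ r ∈ spectrum K f := by
  simpa [← hconj] using spectrum.pow_mem_pow f r hμ

variable [FiniteDimensional K V]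

theorem ncard_spectrum_le_finrank (f : End K V) : (spectrum K f).ncard ≤ finrank K V := by
  classical
  calc (spectrum K f).ncard ≤ (f.charpoly.roots.toFinset : Set K).ncard :=
        Set.ncard_le_ncard (fun μ hμ => by
          simpa [f.charpoly_monic.ne_zero] using (mem_spectrum_iff_isRoot_charpoly f μ).mp hμ)
    _ ≤ f.charpoly.roots.card := by
        rw [Set.ncard_coe_finset]; exact Multiset.toFinset_card_le _
    _ ≤ f.charpoly.natDegree := card_roots' _
    _ = finrank K V := LinearMap.charpoly_natDegree f

theorem pow_eq_self_of_forall_hasEigenvalue [IsAlgClosed K] {f : End K V} {m r : ℕ}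
    (hm : (m : K) ≠ 0) (hf : f ^ m = 1) (hfix : ∀ μ, f.HasEigenvalue μ → μ ^ r = μ) :
    f ^ r = f := by
  suffices ⊤ ≤ LinearMap.ker (f ^ r - f) from
    sub_eq_zero.mp (LinearMap.ker_eq_top.mp (top_le_iff.mp this))
  rw [← (isSemisimple_of_pow_eq_one hm hf).iSup_eigenspace_eq_top, iSup_le_iff]
  intro μ v hv
  by_cases hv0 : v = 0
  · simp [hv0]
  have hvec : f.HasEigenvector μ v := ⟨hv, hv0⟩
  simp [hvec.pow_apply, mem_eigenspace_iff.mp hv, hfix μ (hasEigenvalue_of_hasEigenvector hvec)]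

theorem pow_eq_self_of_units_conj [IsAlgClosed K] {f : End K V} (u : (End K V)ˣ) {m r p : ℕ}
    (hp : p.Prime) (hm : (m : K) ≠ 0) (hrp : r ^ p ≡ 1 [MOD m]) (hf : f ^ m = 1)
    (hconj : u * f * u⁻¹ = f ^ r) (hdim : finrank K V < p) : f ^ r = f := by
  refine pow_eq_self_of_forall_hasEigenvalue hm hf fun μ hμ => ?_
  have hper : Function.IsPeriodicPt (· ^ r) p μ := by
    rw [Function.IsPeriodicPt, Function.IsFixedPt, pow_iterate]
    simpa using pow_eq_pow_of_modEq hrp (hμ.pow_eq_one hf)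
  exact hper.isFixedPt_of_ncard_lt (fun _ => pow_mem_spectrum_of_units_conj u hconj)
    f.finite_spectrum hp ((ncard_spectrum_le_finrank f).trans_lt hdim) hμ.mem_spectrum

theorem eq_one_of_pow_eq_one_of_isNilpotent_sub_one [PerfectField K] {c : End K V} {m : ℕ}
    (hm : (m : K) ≠ 0) (hc : c ^ m = 1) (hn : IsNilpotent (c - 1)) : c = 1 := by
  have hs : (c - 1).IsSemisimple := by
    have := (isSemisimple_of_pow_eq_one hm hc).aeval (X - C 1)
    rwa [map_sub, aeval_X, aeval_C, map_one] at this
  exact sub_eq_zero.mp (eq_zero_of_isNilpotent_isSemisimple hn hs)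

theorem eq_one_of_restrict_eq_one_of_mapQ_eq_one [PerfectField K] {c : End K V} {m : ℕ}
    (hm : (m : K) ≠ 0) (hc : c ^ m = 1) {W : Submodule K V} (hcW : W ≤ W.comap c)
    (hres : c.restrict hcW = 1) (hquot : W.mapQ W c hcW = 1) : c = 1 := by
  have hfix : ∀ w ∈ W, c w = w := fun w hw =>
    congr_arg Subtype.val (LinearMap.congr_fun hres ⟨w, hw⟩)
  have hsub : ∀ v, c v - v ∈ W := fun v =>
    (Submodule.Quotient.eq W).mp (LinearMap.congr_fun hquot (Submodule.Quotient.mk v))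
  refine eq_one_of_pow_eq_one_of_isNilpotent_sub_one hm hc ⟨2, LinearMap.ext fun v => ?_⟩
  simpa [pow_two, sub_eq_zero] using hfix _ (hsub v)

end Module.End

namespace Representation

variable {K G V : Type*} [Field K] [IsAlgClosed K] [Group G] [AddCommGroup V] [Module K V]
  [FiniteDimensional K V] (σ : Representation K G V) {x y : G} {m r p : ℕ}

theorem apply_pow_eq_of_finrank_lt (hp : p.Prime) (hm : (m : K) ≠ 0) (hrp : r ^ p ≡ 1 [MOD m])
    (hx : x ^ m = 1) (hyx : y * x * y⁻¹ = x ^ r) (hdim : finrank K V < p) :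
    σ (x ^ r) = σ x := by
  have hconj : σ.asGroupHom y * σ x * (σ.asGroupHom y)⁻¹ = σ x ^ r := by
    rw [← map_inv, asGroupHom_apply, asGroupHom_apply, ← map_mul, ← map_mul, hyx, map_pow]
  have hxm : σ x ^ m = 1 := by rw [← map_pow, hx, map_one]
  rw [map_pow]
  exact Module.End.pow_eq_self_of_units_conj _ hp hm hrp hxm hconj hdim

theorem apply_pow_eq_of_invariant (hp : p.Prime) (hm : (m : K) ≠ 0) (hrp : r ^ p ≡ 1 [MOD m])
    (hx : x ^ m = 1) (hyx : y * x * y⁻¹ = x ^ r) (W : Submodule K V)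
    (hW : ∀ g, W ≤ W.comap (σ g)) (hWdim : finrank K W < p) (hQdim : finrank K (V ⧸ W) < p) :
    σ (x ^ r) = σ x := by
  set c := x ^ r * x⁻¹ with hc
  have hcm : c ^ m = 1 := by
    rw [hc, ((Commute.refl x).pow_left r).inv_right.mul_pow, ← pow_mul, mul_comm, pow_mul, hx,
      one_pow, inv_pow, hx, inv_one, one_mul]
  have hcW : σ.subrepresentation W hW c = 1 := by
    rw [hc, map_mul, (σ.subrepresentation W hW).apply_pow_eq_of_finrank_lt hp hm hrp hx hyx hWdim,
      ← map_mul, mul_inv_cancel, map_one]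
  have hcQ : σ.quotient W hW c = 1 := by
    rw [hc, map_mul, (σ.quotient W hW).apply_pow_eq_of_finrank_lt hp hm hrp hx hyx hQdim,
      ← map_mul, mul_inv_cancel, map_one]
  have hσc : σ c = 1 := Module.End.eq_one_of_restrict_eq_one_of_mapQ_eq_one hm
    (by rw [← map_pow, hcm, map_one]) (hW c) hcW hcQ
  rw [← inv_mul_cancel_right (x ^ r) x, ← hc, map_mul, hσc, one_mul]

end Representation

theorem mul_pow_eq_self_of_mul_eq_self {R : Type*} [Monoid R] {a b : R} (h : a * b = a) (k : ℕ) :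
    a * b ^ k = a := by
  induction k with
  | zero => simp
  | succ k ih => rw [pow_succ, ← mul_assoc, ih, h]

theorem ZMod.sum_range_ite_sub_eq_zero {R : Type*} [AddCommMonoid R] {n : ℕ} [NeZero n]
    (i : ZMod n) (c : R) : ∑ j ∈ Finset.range n, (if i - j = 0 then c else 0) = c := by
  rw [Finset.sum_eq_single_of_mem i.val (Finset.mem_range.mpr i.val_lt)]
  · simp
  · intro j hj hji
    refine if_neg (sub_ne_zero.mpr fun h => hji ?_)
    rw [h, ZMod.val_cast_of_lt (Finset.mem_range.mp hj)]

theorem ZMod.natCast_div_gcd_sub_one_mul_self {m r : ℕ} (hr : 0 < r) :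
    ((m / Nat.gcd (r - 1) m : ℕ) : ZMod m) * r = (m / Nat.gcd (r - 1) m : ℕ) := by
  obtain ⟨s, rfl⟩ : ∃ s, r = s + 1 := ⟨r - 1, by omega⟩
  obtain ⟨k, hk⟩ := Nat.gcd_dvd_left s m
  have h : m / Nat.gcd s m * s = m * k := by
    calc m / Nat.gcd s m * s = m / Nat.gcd s m * (Nat.gcd s m * k) := by rw [← hk]
      _ = m * k := by rw [← mul_assoc, Nat.div_mul_cancel (Nat.gcd_dvd_right _ _)]
  simp only [Nat.add_sub_cancel, Nat.cast_add, Nat.cast_one, mul_add, mul_one]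
  rw [← Nat.cast_mul, h, Nat.cast_mul, ZMod.natCast_self, zero_mul, zero_add]

namespace Gmr

variable {m r : ℕ}

def X : Gmr m r := PresentedGroup.of 0

def Y : Gmr m r := PresentedGroup.of 1

theorem X_pow_eq_one : (X : Gmr m r) ^ m = 1 := by
  have h := PresentedGroup.one_of_mem (rels := GmrRels m r) (x := FreeGroup.of 0 ^ m)
    (by simp [GmrRels])
  rwa [map_pow] at h

theorem Y_mul_X_mul_Y_inv : (Y : Gmr m r) * X * Y⁻¹ = X ^ r := by
  have h := PresentedGroup.one_of_mem (rels := GmrRels m r)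
    (x := FreeGroup.of 1 * FreeGroup.of 0 * (FreeGroup.of 1)⁻¹ * (FreeGroup.of 0 ^ r)⁻¹)
    (by simp [GmrRels])
  rwa [map_mul, map_mul, map_mul, map_inv, map_inv, map_pow, mul_inv_eq_one] at h

/- `permX` and `permY` are the monomial matrices `diag(r ^ i)` and "cyclic shift with `t` in one
corner" of the representation of `G_{m,r}` induced from `X ↦ 1 ∈ ZMod m`, written additively as
permutations of `ZMod n × ZMod m`. -/
variable (m r) in
def permX (n : ℕ) : Equiv.Perm (ZMod n × ZMod m) :=
  Equiv.prodShear (Equiv.refl _) fun i => Equiv.addRight ((r : ZMod m) ^ i.val)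

variable (m) in
def permY (n t : ℕ) : Equiv.Perm (ZMod n × ZMod m) :=
  Equiv.prodShear (Equiv.subRight 1) fun i => Equiv.addRight (if i = 0 then (t : ZMod m) else 0)

@[simp]
theorem permX_apply {n : ℕ} (i : ZMod n) (a : ZMod m) :
    permX m r n (i, a) = (i, a + (r : ZMod m) ^ i.val) := rfl

@[simp]
theorem permY_apply {n t : ℕ} (i : ZMod n) (a : ZMod m) :
    permY m n t (i, a) = (i - 1, a + if i = 0 then (t : ZMod m) else 0) := rfl

theorem permX_pow_apply {n : ℕ} (k : ℕ) (i : ZMod n) (a : ZMod m) :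
    (permX m r n ^ k) (i, a) = (i, a + k * (r : ZMod m) ^ i.val) := by
  induction k with
  | zero => simp
  | succ k ih =>
    rw [pow_succ', Equiv.Perm.mul_apply, ih]
    simp [add_mul, add_assoc]

theorem permY_pow_apply {n t : ℕ} (k : ℕ) (i : ZMod n) (a : ZMod m) :
    (permY m n t ^ k) (i, a) =
      (i - k, a + ∑ j ∈ Finset.range k, if i - j = 0 then (t : ZMod m) else 0) := by
  induction k with
  | zero => simp
  | succ k ih =>
    rw [pow_succ', Equiv.Perm.mul_apply, ih]
    simp [Finset.sum_range_succ, sub_sub, add_assoc]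

theorem permX_pow_eq_one {n : ℕ} : permX m r n ^ m = 1 :=
  Equiv.ext fun ⟨i, a⟩ => by simp [permX_pow_apply]

theorem permY_pow_eq_permX_pow {n t : ℕ} [NeZero n] (ht : (t : ZMod m) * r = t) :
    permY m n t ^ n = permX m r n ^ t :=
  Equiv.ext fun ⟨i, a⟩ => by
    simp [permY_pow_apply, permX_pow_apply, ZMod.sum_range_ite_sub_eq_zero,
      mul_pow_eq_self_of_mul_eq_self ht]

theorem permY_mul_permX_mul_inv {n t : ℕ} [NeZero n] (hn : (r : ZMod m) ^ n = 1) :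
    permY m n t * permX m r n * (permY m n t)⁻¹ = permX m r n ^ r := by
  rw [mul_inv_eq_iff_eq_mul]
  refine Equiv.ext fun ⟨i, a⟩ => ?_
  have hval : i.val ≡ (i - 1).val + 1 [MOD n] := (ZMod.natCast_eq_natCast_iff _ _ _).mp (by simp)
  have hpow : (r : ZMod m) ^ i.val = r * r ^ (i - 1).val := by
    rw [← pow_succ']; exact pow_eq_pow_of_modEq hval hn
  simp [permX_pow_apply, hpow, add_right_comm]

noncomputable def toPerm (hr : 0 < r) (hn : 0 < orderOf (r : ZMod m)) :
    Gmr m r →* Equiv.Perm (ZMod (orderOf (r : ZMod m)) × ZMod m) :=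
  haveI : NeZero (orderOf (r : ZMod m)) := ⟨hn.ne'⟩
  PresentedGroup.toGroup (f := ![permX m r _, permY m _ (m / Nat.gcd (r - 1) m)]) <| by
    intro w hw
    simp only [GmrRels, Set.mem_insert_iff, Set.mem_singleton_iff] at hw
    rcases hw with rfl | rfl | rfl
    · simp [permX_pow_eq_one]
    · simp [permY_pow_eq_permX_pow (ZMod.natCast_div_gcd_sub_one_mul_self hr)]
    · simp [permY_mul_permX_mul_inv (pow_orderOf_eq_one _)]

theorem X_pow_ne_self (hr : 0 < r) (hn : 0 < orderOf (r : ZMod m)) (hr1 : (r : ZMod m) ≠ 1) :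
    (X : Gmr m r) ^ r ≠ X := by
  intro h
  have := congr(toPerm hr hn $h (0, 0))
  simp [toPerm, X, permX_pow_apply] at this
  exact hr1 this

end Gmr

theorem reducible_rep_of_Gmr_not_injective_general
    (p : ℕ) (hp : p.Prime) (m r : ℕ) (hr : 0 < r) (hrm : r < m)
    (hord : orderOf ((r : ZMod m)) = p)
    (ρ : Gmr m r →* GL (Fin p) ℂ)
    (hred : ∃ W : Submodule ℂ (Fin p → ℂ),
      0 < Module.finrank ℂ W ∧ Module.finrank ℂ W < p ∧
      ∀ g : Gmr m r, W.map (Matrix.mulVecLin ((ρ g : GL (Fin p) ℂ) : Matrix (Fin p) (Fin p) ℂ)) = W) :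
    ¬ Function.Injective ρ := by
  obtain ⟨W, hW0, hWp, hWinv⟩ := hred
  intro hinj
  let σ : Representation ℂ (Gmr m r) (Fin p → ℂ) :=
    (Matrix.toLinAlgEquiv' : Matrix (Fin p) (Fin p) ℂ ≃ₐ[ℂ] _).toMonoidHom.comp
      ((Units.coeHom _).comp ρ)
  have hW : ∀ g, W ≤ W.comap (σ g) := fun g => Submodule.map_le_iff_le_comap.mp (hWinv g).le
  have hrp : r ^ p ≡ 1 [MOD m] := by
    rw [← ZMod.natCast_eq_natCast_iff, Nat.cast_pow, Nat.cast_one, ← hord, pow_orderOf_eq_one]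
  have hQdim : finrank ℂ ((Fin p → ℂ) ⧸ W) < p := by
    have := W.finrank_quotient_add_finrank
    rw [finrank_fin_fun] at this
    omega
  have hσ : σ (Gmr.X ^ r) = σ Gmr.X := σ.apply_pow_eq_of_invariant hp
    (Nat.cast_ne_zero.mpr (by omega)) hrp Gmr.X_pow_eq_one Gmr.Y_mul_X_mul_Y_inv W hW hWp hQdim
  have hr1 : (r : ZMod m) ≠ 1 := fun h => hp.one_lt.ne' (by rw [← hord, h, orderOf_one])
  exact Gmr.X_pow_ne_self hr (hord ▸ hp.pos) hr1
    (hinj (Units.ext (Matrix.toLinAlgEquiv'.injective hσ)))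

/-- If the multiplicative order of `r` modulo `m` equals a prime `p`, then every reducible
representation `ρ : G_{m,r} → GL(p,ℂ)` (one preserving a subspace `W ≤ ℂ^p` with
`0 < dim W < p`) fails to be injective. -/
theorem reducible_rep_of_Gmr_not_injective
    (p : ℕ) (hp : p.Prime) (m r : ℕ) (hr : 0 < r) (hrm : r < m)
    (hcop : Nat.Coprime m r) (hord : orderOf ((r : ZMod m)) = p)
    (ρ : Gmr m r →* GL (Fin p) ℂ)
    (hred : ∃ W : Submodule ℂ (Fin p → ℂ),
      0 < Module.finrank ℂ W ∧ Module.finrank ℂ W < p ∧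
      ∀ g : Gmr m r, W.map (Matrix.mulVecLin ((ρ g : GL (Fin p) ℂ) : Matrix (Fin p) (Fin p) ℂ)) = W) :
    ¬ Function.Injective ρ :=
  reducible_rep_of_Gmr_not_injective_general p hp m r hr hrm hord ρ hred
end

section
/- For every finite group G there exists a positive integer n_G such that for every integer n ≥ n_G and every imaginary quadratic subfield E of ℂ, there exist an invertible hermitian (n+1)×(n+1) matrix H over E whose signature as a complex hermitian matrix is (n,1), and an injective group homomorphism from G into U(H; 𝓞_E). -/
noncomputable section

open Matrix NumberField Equiv

section PermAux

variable {ι : Type*} [Fintype ι] [DecidableEq ι] {R : Type*} [CommRing R]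

lemma permMatrix_mul' (σ τ : Perm ι) :
    (σ * τ).permMatrix R = τ.permMatrix R * σ.permMatrix R := by
  show ((τ.trans σ).toPEquiv.toMatrix : Matrix ι ι R) = _
  rw [Equiv.toPEquiv_trans, PEquiv.toMatrix_trans]

omit [Fintype ι] in
lemma permMatrix_one' : ((1 : Perm ι).permMatrix R) = 1 := by
  show ((Equiv.refl ι).toPEquiv.toMatrix : Matrix ι ι R) = 1
  rw [Equiv.toPEquiv_refl, PEquiv.toMatrix_refl]

/-- Permutation matrices as a monoid hom into `GL`. -/
def permGLHom : Perm ι →* GL ι R where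
  toFun σ := ⟨σ⁻¹.permMatrix R, σ.permMatrix R,
    by rw [← permMatrix_mul', mul_inv_cancel, permMatrix_one'],
    by rw [← permMatrix_mul', inv_mul_cancel, permMatrix_one']⟩
  map_one' := by
    refine Units.ext ?_
    show ((1 : Perm ι)⁻¹).permMatrix R = (1 : GL ι R).val
    rw [inv_one, permMatrix_one']; rfl
  map_mul' σ τ := by
    refine Units.ext ?_
    show ((σ * τ)⁻¹).permMatrix R = σ⁻¹.permMatrix R * τ⁻¹.permMatrix R
    rw [_root_.mul_inv_rev, permMatrix_mul']

lemma permGLHom_injective [Nontrivial R] :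
    Function.Injective (permGLHom (ι := ι) (R := R)) := by
  intro σ τ h
  have h1 : (σ⁻¹.permMatrix R) = τ⁻¹.permMatrix R := congrArg (fun u => (u : GL ι R).val) h
  have := PEquiv.toMatrix_injective h1
  have h2 : σ⁻¹ = τ⁻¹ := by
    ext x
    have := congrArg (fun f => f.toFun x) this
    simpa [Equiv.toPEquiv] using this
  simpa using congrArg (·⁻¹) h2

omit [Fintype ι] in
lemma permMatrix_map {S : Type*} [CommRing S] (f : R →+* S) (σ : Perm ι) :
    (σ.permMatrix R).map f = σ.permMatrix S := by
  ext i j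
  simp [Matrix.map_apply, Equiv.Perm.permMatrix, PEquiv.toMatrix, apply_ite f]

omit [Fintype ι] in
lemma permMatrix_conjTranspose (σ : Perm ι) :
    ((σ.permMatrix ℂ))ᴴ = σ⁻¹.permMatrix ℂ := by
  have h : (σ⁻¹.permMatrix ℂ) = (σ.permMatrix ℂ)ᵀ := by
    show (σ.symm.toPEquiv.toMatrix : Matrix ι ι ℂ) = _
    rw [Equiv.toPEquiv_symm, PEquiv.toMatrix_symm]
  rw [h]
  ext i j
  simp [conjTranspose_apply, Equiv.Perm.permMatrix, PEquiv.toMatrix, apply_ite (star : ℂ → ℂ)]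

lemma perm_conj_diagonal (σ : Perm ι) (d : ι → ℂ) (hd : ∀ i, d (σ i) = d i) :
    (σ⁻¹.permMatrix ℂ)ᴴ * Matrix.diagonal d * σ⁻¹.permMatrix ℂ = Matrix.diagonal d := by
  rw [permMatrix_conjTranspose, inv_inv]
  have h1 : (Matrix.diagonal d) * (σ⁻¹.permMatrix ℂ) = (Matrix.diagonal d).submatrix id σ := by
    show _ * (σ⁻¹).toPEquiv.toMatrix = _
    rw [PEquiv.mul_toMatrix_toPEquiv]
    congr 1
  have h2 : (σ.permMatrix ℂ) * ((Matrix.diagonal d).submatrix id σ)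
      = (Matrix.diagonal d).submatrix σ σ := by
    show σ.toPEquiv.toMatrix * _ = _
    rw [PEquiv.toMatrix_toPEquiv_mul, Matrix.submatrix_submatrix]
    congr 1
  rw [mul_assoc, h1, h2, Matrix.submatrix_diagonal d σ σ.injective,
    show d ∘ σ = d from funext hd]

end PermAux

/-- `J` has signature `(p, k - p)` as an invertible hermitian complex matrix:
there is `C ∈ GL(k,ℂ)` with `Cᴴ J C = diag(1,…,1,−1,…,−1)` (`p` ones). -/
def Matrix.HasSignature {k : ℕ} (p : ℕ) (J : Matrix (Fin k) (Fin k) ℂ) : Prop :=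
  ∃ C : Matrix (Fin k) (Fin k) ℂ, IsUnit C ∧
    Cᴴ * J * C = Matrix.diagonal (fun i : Fin k => if (i : ℕ) < p then (1 : ℂ) else -1)

/-- The embedding of the ring of integers `𝓞_E` into `ℂ`. -/
def intsToC (E : Subfield ℂ) : 𝓞 ↥E →+* ℂ :=
  E.subtype.comp (algebraMap (𝓞 ↥E) ↥E)

/-- For every finite group `G` there is `n_G > 0` such that for all `n ≥ n_G` and every
imaginary quadratic subfield `E ⊆ ℂ` there is an invertible hermitian `(n+1)×(n+1)` matrix `H`
over `E` of signature `(n,1)` and an injective homomorphism of `G` into `U(H; 𝓞_E)`. -/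
theorem finite_group_embeds_in_first_type_lattice_over_imaginary_quadratic
    (G : Type*) [Group G] [Finite G] :
    ∃ nG : ℕ, 0 < nG ∧ ∀ n : ℕ, nG ≤ n →
      ∀ E : Subfield ℂ,
        Module.finrank ℚ ↥E = 2 → (∃ x ∈ E, x.im ≠ 0) →
        ∃ H : Matrix (Fin (n + 1)) (Fin (n + 1)) ↥E,
          (H.map E.subtype)ᴴ = H.map E.subtype ∧
          IsUnit (H.map E.subtype) ∧
          Matrix.HasSignature n (H.map E.subtype) ∧
          ∃ ρ : G →* GL (Fin (n + 1)) (𝓞 ↥E), Function.Injective ρ ∧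
            ∀ g : G,
              (((ρ g : GL (Fin (n + 1)) (𝓞 ↥E)) :
                    Matrix (Fin (n + 1)) (Fin (n + 1)) (𝓞 ↥E)).map (intsToC E))ᴴ *
                  (H.map E.subtype) *
                  (((ρ g : GL (Fin (n + 1)) (𝓞 ↥E)) :
                    Matrix (Fin (n + 1)) (Fin (n + 1)) (𝓞 ↥E)).map (intsToC E)) =
                H.map E.subtype := by

  classical
  refine ⟨Nat.card G, Nat.card_pos, ?_⟩
  intro n hn E _ _
  set dE : Fin (n + 1) → ↥E := fun i => if (i : ℕ) < n then 1 else -1 with hdE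
  set dC : Fin (n + 1) → ℂ := fun i => if (i : ℕ) < n then (1 : ℂ) else -1 with hdC
  have hmap : (Matrix.diagonal dE).map E.subtype = Matrix.diagonal dC := by
    rw [Matrix.diagonal_map (map_zero _)]
    refine congrArg Matrix.diagonal ?_
    funext i
    simp [hdE, hdC, apply_ite E.subtype]
  refine ⟨Matrix.diagonal dE, ?_, ?_, ?_, ?_⟩
  · rw [hmap, Matrix.diagonal_conjTranspose]
    refine congrArg Matrix.diagonal ?_
    funext i
    by_cases h : (i : ℕ) < n <;> simp [hdC, h]
  · rw [hmap]
    have hsq : Matrix.diagonal dC * Matrix.diagonal dC = 1 := by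
      rw [Matrix.diagonal_mul_diagonal, ← Matrix.diagonal_one]
      refine congrArg Matrix.diagonal ?_
      funext i
      by_cases h : (i : ℕ) < n <;> simp [hdC, h]
    exact ⟨⟨_, _, hsq, hsq⟩, rfl⟩
  · exact ⟨1, isUnit_one, by rw [hmap, Matrix.conjTranspose_one, one_mul, mul_one]⟩
  · -- the representation
    set m := Nat.card G with hm
    have hmn : m ≤ n := hn
    let e : G ≃ Fin m := Finite.equivFin G
    let ι : G ↪ Fin (n + 1) := e.toEmbedding.trans (Fin.castLEEmb (by omega))
    have hιlt : ∀ x : G, ((ι x : Fin (n + 1)) : ℕ) < n := fun x =>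
      lt_of_lt_of_le (e x).isLt hmn
    let ρ : G →* GL (Fin (n + 1)) (𝓞 ↥E) :=
      (permGLHom).comp ((Equiv.Perm.viaEmbeddingHom ι).comp (MulAction.toPermHom G G))
    have hσ : ∀ g : G, ∀ j : Fin (n + 1),
        (((Equiv.Perm.viaEmbeddingHom ι).comp (MulAction.toPermHom G G) g) j : ℕ) < n ↔
          (j : ℕ) < n := by
      intro g j
      by_cases hj : j ∈ Set.range ι
      · obtain ⟨x, rfl⟩ := hj
        have h1 : ((Equiv.Perm.viaEmbeddingHom ι).comp (MulAction.toPermHom G G) g) (ι x)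
            = ι ((MulAction.toPermHom G G g) x) := by
          exact Equiv.Perm.viaEmbedding_apply _ ι x
        rw [h1]
        exact iff_of_true (hιlt _) (hιlt x)
      · rw [show ((Equiv.Perm.viaEmbeddingHom ι).comp (MulAction.toPermHom G G) g) j = j from
          Equiv.Perm.viaEmbedding_apply_of_notMem _ ι j hj]
    refine ⟨ρ, ?_, ?_⟩
    · exact permGLHom_injective.comp
        ((Equiv.Perm.viaEmbeddingHom_injective ι).comp (MulAction.toPerm_injective))
    · intro g
      set σ : Equiv.Perm (Fin (n + 1)) :=
        (Equiv.Perm.viaEmbeddingHom ι).comp (MulAction.toPermHom G G) g with hσdef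
      have hval : ((ρ g : GL (Fin (n + 1)) (𝓞 ↥E)) :
          Matrix (Fin (n + 1)) (Fin (n + 1)) (𝓞 ↥E)) = (σ⁻¹).permMatrix (𝓞 ↥E) := rfl
      rw [hval, hmap, permMatrix_map (intsToC E) σ⁻¹]
      refine perm_conj_diagonal σ dC ?_
      intro i
      have hs : ((σ i : ℕ) < n) ↔ ((i : ℕ) < n) := hσ g i
      by_cases h : (i : ℕ) < n
      · simp [hdC, hs.mpr h, h]
      · have h2 : ¬ ((σ i : ℕ) < n) := fun hc => h (hs.mp hc)
        simp [hdC, h, h2]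

end
end
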